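/- arXiv:0806.2500 — 7 statements merged into one kernel-verified Lean document; each statement's English description precedes it below -/
import Mathlib

section
/- Let γ > 1 be a real number and define h : [0,1) → ℝ by h(x) = x^γ(1−x)/(1−x^γ) for x ∈ (0,1) and h(0) = 0. Then the supremum of h over [0,1) equals 1/γ. -/
/-!
Since `t ↦ t ^ γ` is convex, its tangent at `x < 1` lies below the chord to `1`:
`γ x^(γ-1) (1 - x) ≤ 1 - x^γ`, and `x^γ ≤ x^(γ-1)` turns this into `h x ≤ 1/γ`.
Conversely `h x = x^γ / slope (· ^ γ) 1 x`, which tends to `1 / γ` as `x → 1⁻`.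
-/

open Real Filter Set Topology

lemma mul_rpow_sub_one_mul_one_sub_le {p x : ℝ} (hp : 1 ≤ p) (hx₀ : 0 ≤ x) (hx₁ : x < 1) :
    p * x ^ (p - 1) * (1 - x) ≤ 1 - x ^ p := by
  have htangent := (convexOn_rpow hp).le_slope_of_hasDerivAt hx₀ (mem_Ici.2 zero_le_one) hx₁
    (hasDerivAt_rpow_const (Or.inr hp))
  rw [slope_def_field, one_rpow, le_div_iff₀ (by linarith)] at htangent
  exact htangent

lemma rpow_mul_one_sub_div_one_sub_rpow_le {p x : ℝ} (hp : 1 ≤ p) (hx : x ∈ Ico 0 1) :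
    x ^ p * (1 - x) / (1 - x ^ p) ≤ 1 / p := by
  obtain ⟨hx₀, hx₁⟩ := hx
  have hp₀ : 0 < p := by linarith
  have hxp : x ^ p ≤ x ^ (p - 1) :=
    rpow_le_rpow_of_exponent_ge' hx₀ hx₁.le (by linarith) (by linarith)
  have hden : 0 < 1 - x ^ p := sub_pos.2 (rpow_lt_one hx₀ hx₁ hp₀)
  rw [div_le_div_iff₀ hden hp₀, one_mul]
  calc x ^ p * (1 - x) * p ≤ p * x ^ (p - 1) * (1 - x) := by
        nlinarith [mul_le_mul_of_nonneg_left hxp hp₀.le]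
    _ ≤ 1 - x ^ p := mul_rpow_sub_one_mul_one_sub_le hp hx₀ hx₁

lemma tendsto_rpow_mul_one_sub_div_one_sub_rpow {p : ℝ} (hp : p ≠ 0) :
    Tendsto (fun x : ℝ => x ^ p * (1 - x) / (1 - x ^ p)) (𝓝[≠] 1) (𝓝 (1 / p)) := by
  have hslope : Tendsto (slope (· ^ p) 1) (𝓝[≠] (1 : ℝ)) (𝓝 p) := by
    simpa using hasDerivAt_iff_tendsto_slope.mp (hasDerivAt_rpow_const (x := 1) (p := p)
      (Or.inl one_ne_zero))
  have hpow : Tendsto (· ^ p) (𝓝[≠] (1 : ℝ)) (𝓝 1) := by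
    simpa using (continuousAt_rpow_const 1 p (Or.inl one_ne_zero)).tendsto.mono_left
      nhdsWithin_le_nhds
  convert hpow.mul (hslope.inv₀ hp) using 2 with x
  · rw [slope_def_field, one_rpow, inv_div, mul_div_assoc, ← neg_div_neg_eq (1 - x)]
    ring_nf
  · rw [one_mul, one_div]

/-- **Lemma 2 of the paper.** For `γ > 1`, the supremum of
`h(x) = x^γ (1-x) / (1 - x^γ)` over the half-open interval `[0,1)` equals `1/γ`.
(Note `h(0) = 0` since `0^γ = 0` for `γ > 1`.) -/
theorem sup_h_eq_inv_gamma (γ : ℝ) (hγ : 1 < γ) :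
    IsLUB ((fun x : ℝ => x ^ γ * (1 - x) / (1 - x ^ γ)) '' Set.Ico (0 : ℝ) 1) (1 / γ) := by
  refine isLUB_of_mem_closure
    (forall_mem_image.2 fun _ hx => rpow_mul_one_sub_div_one_sub_rpow_le hγ.le hx) ?_
  have hlim := (tendsto_rpow_mul_one_sub_div_one_sub_rpow (by positivity : γ ≠ 0)).mono_left
    (nhdsWithin_mono _ fun _ hx => ne_of_lt hx : 𝓝[<] (1 : ℝ) ≤ 𝓝[≠] 1)
  exact mem_closure_of_tendsto hlim
    (mem_of_superset (Ico_mem_nhdsLT zero_lt_one) fun _ hx => mem_image_of_mem _ hx)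
end

section
/- Let γ > 1 be a real number and define h(x) = x^γ(1−x)/(1−x^γ) on (0,1). Then h is strictly increasing on (0,1) and lim_{x→1⁻} h(x) = 1/γ. -/
open Set Real

/-! With `f x = x ^ (-γ)`, one has `h x = -(slope f 1 x)⁻¹` on `(0, ∞)`. As `f` is
strictly convex, its slope from `1` is strictly increasing, and it is negative on `(0, 1)`, so
`h` is strictly increasing there; as `x → 1` the slope tends to `f' 1 = -γ`, so `h x → 1 / γ`. -/

theorem strictConvexOn_rpow_of_neg {r : ℝ} (hr : r < 0) :
    StrictConvexOn ℝ (Ioi 0) fun x : ℝ => x ^ r := by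
  refine strictConvexOn_of_deriv2_pos' (convex_Ioi 0)
    (fun x hx => (continuousAt_rpow_const x r (.inl (ne_of_gt hx))).continuousWithinAt)
    fun x hx => ?_
  rw [iter_deriv_rpow_const]
  simp only [descPochhammer_succ_eval, descPochhammer_zero, Polynomial.eval_one]
  push_cast
  rw [one_mul, sub_zero]
  exact mul_pos (mul_pos_of_neg_of_neg hr (by linarith)) (rpow_pos_of_pos hx _)

theorem StrictConvexOn.strictMonoOn_slope {𝕜 : Type*} [Field 𝕜] [LinearOrder 𝕜]
    [IsStrictOrderedRing 𝕜] {s : Set 𝕜} {f : 𝕜 → 𝕜} (hf : StrictConvexOn 𝕜 s f) {a : 𝕜}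
    (ha : a ∈ s) :
    StrictMonoOn (slope f a) (s \ {a}) := fun x hx y hy hxy => by
  simpa only [slope_def_field] using hf.secant_strict_mono ha hx.1 hy.1 hx.2 hy.2 hxy

theorem rpow_mul_one_sub_div_eq_neg_inv_slope {x : ℝ} (hx : 0 < x) (γ : ℝ) :
    x ^ γ * (1 - x) / (1 - x ^ γ) = -(slope (fun x : ℝ => x ^ (-γ)) 1 x)⁻¹ := by
  have hxγ : x ^ γ ≠ 0 := (rpow_pos_of_pos hx γ).ne'
  rw [slope_def_field, one_rpow, rpow_neg hx.le, inv_div, ← neg_div, neg_sub, ← one_div,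
    div_sub_one hxγ, div_div_eq_mul_div, mul_comm]

/-- For `γ > 1`, the function `h(x) = x^γ (1-x) / (1 - x^γ)` is strictly increasing on
`(0,1)` and tends to `1/γ` as `x → 1⁻`. -/
theorem h_strictMonoOn_and_tendsto (γ : ℝ) (hγ : 1 < γ) :
    StrictMonoOn (fun x : ℝ => x ^ γ * (1 - x) / (1 - x ^ γ)) (Set.Ioo (0 : ℝ) 1) ∧
    Filter.Tendsto (fun x : ℝ => x ^ γ * (1 - x) / (1 - x ^ γ))
      (nhdsWithin 1 (Set.Iio (1 : ℝ))) (nhds (1 / γ)) := by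
  have hγ0 : 0 < γ := by linarith
  set f : ℝ → ℝ := fun x => x ^ (-γ)
  have hslope_neg : ∀ x ∈ Ioo (0 : ℝ) 1, slope f 1 x < 0 := fun x hx => by
    rw [slope_def_field]
    simp only [f, one_rpow]
    exact div_neg_of_pos_of_neg (sub_pos.2 (one_lt_rpow_of_pos_of_lt_one_of_neg hx.1 hx.2
      (neg_neg_of_pos hγ0))) (sub_neg.2 hx.2)
  have hslope_mono : StrictMonoOn (slope f 1) (Ioo 0 1) :=
    ((strictConvexOn_rpow_of_neg (neg_neg_of_pos hγ0)).strictMonoOn_slope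
      (mem_Ioi.2 one_pos)).mono fun x hx => ⟨hx.1, hx.2.ne⟩
  have hderiv : HasDerivAt f (-γ) 1 := by
    simpa using hasDerivAt_rpow_const (x := 1) (p := -γ) (.inl one_ne_zero)
  constructor
  · intro x hx y hy hxy
    simp only [rpow_mul_one_sub_div_eq_neg_inv_slope hx.1,
      rpow_mul_one_sub_div_eq_neg_inv_slope hy.1]
    exact neg_lt_neg <|
      (inv_lt_inv_of_neg (hslope_neg y hy) (hslope_neg x hx)).2 (hslope_mono hx hy hxy)
  · have hlim := ((hasDerivAt_iff_tendsto_slope.1 hderiv).mono_left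
      (nhdsWithin_mono _ fun x hx => ne_of_lt hx)).inv₀ (neg_ne_zero.2 hγ0.ne') |>.neg
    rw [inv_neg, neg_neg, ← one_div] at hlim
    refine hlim.congr' ?_
    filter_upwards [Ioo_mem_nhdsLT one_pos] with x hx
    exact (rpow_mul_one_sub_div_eq_neg_inv_slope hx.1 γ).symm
end

section
/- Let p > 1 be a real number and θ ∈ [0,1). Define p₁ = (1/8)·(1 + 2θ^{2p} − 4θ^{2p+1} + θ^{4p}) and p₂ = (1/8)·(1 − θ^{2p})². Then 2·(p₁ + p₂ − 2√(p₁·p₂)) ≤ 1/(2p²). -/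
open Real

/-!
Write `x = θ^{2p}`. Then `p₂ = (1 - x)²/8` and `p₁ = p₂ + x(1 - θ)/2`, and the left-hand side is
`2(√p₁ - √p₂)² ≤ (p₁ - p₂)²/(2p₂) = x²(1 - θ)²/(1 - x)²`. The tangent-line inequality for the convex
function `t ↦ t^{2p}` at `θ` (Bernoulli's inequality) gives `2p·x·(1 - θ) ≤ 1 - x`, so this is at most
`1/(4p²)`.
-/

lemma add_sub_two_mul_sqrt_mul {a b : ℝ} (ha : 0 ≤ a) (hb : 0 ≤ b) :
    a + b - 2 * √(a * b) = (√a - √b) ^ 2 := by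
  rw [sqrt_mul ha, sub_sq, sq_sqrt ha, sq_sqrt hb]
  ring

lemma sq_sqrt_add_sub_sqrt_le {b d : ℝ} (hb : 0 < b) (hd : 0 ≤ d) :
    (√(b + d) - √b) ^ 2 ≤ d ^ 2 / (4 * b) := by
  have hs : √(b + d) ^ 2 = b + d := sq_sqrt (by linarith)
  have ht : √b ^ 2 = b := sq_sqrt hb.le
  have hts : √b ≤ √(b + d) := sqrt_le_sqrt (by linarith)
  rw [le_div_iff₀ (by positivity)]
  calc (√(b + d) - √b) ^ 2 * (4 * b) = ((√(b + d) - √b) * (2 * √b)) ^ 2 := by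
        linear_combination (-4 * (√(b + d) - √b) ^ 2) * ht
    _ ≤ ((√(b + d) - √b) * (√(b + d) + √b)) ^ 2 := by
        have := sub_nonneg.2 hts
        gcongr
        linarith
    _ = d ^ 2 := by linear_combination (√(b + d) ^ 2 - √b ^ 2 + d) * (hs - ht)

/-- The tangent line of `t ↦ t ^ q` at `θ`, evaluated at `1`, multiplied through by `θ`. -/
lemma mul_rpow_mul_one_sub_le {q θ : ℝ} (hq : 1 ≤ q) (hθ : 0 ≤ θ) :
    q * θ ^ q * (1 - θ) ≤ θ * (1 - θ ^ q) := by
  rcases hθ.eq_or_lt with rfl | hθ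
  · simp [zero_rpow (by linarith : q ≠ 0)]
  have hbern := one_add_mul_self_le_rpow_one_add (s := θ⁻¹ - 1) (by linarith [inv_pos.2 hθ]) hq
  rw [add_sub_cancel, inv_rpow hθ.le] at hbern
  have hx : 0 < θ ^ q := rpow_pos_of_pos hθ q
  have := mul_le_mul_of_nonneg_left hbern (mul_pos hθ hx).le
  have hl : θ * θ ^ q * (1 + q * (θ⁻¹ - 1)) = θ * θ ^ q + q * θ ^ q * (1 - θ) := by
    field_simp
  rw [hl, mul_inv_cancel_right₀ hx.ne'] at this
  linarith

/-- The squared Hellinger distance between the CFN quartet distributions of the topologies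
`12|34` and `13|24` (with terminal edge parameters `θ^p` and interior edge parameter `θ`),
namely `2(p₁ + p₂ - 2√(p₁p₂))` with `p₁ = (1/8)(1 + 2θ^{2p} - 4θ^{2p+1} + θ^{4p})` and
`p₂ = (1/8)(1 - θ^{2p})²`, is at most `1/(2p²)`. -/
theorem hellinger_sq_le_inv_two_p_sq (p θ : ℝ) (hp : 1 < p) (hθ : θ ∈ Set.Ico (0 : ℝ) 1) :
    2 * ((1 / 8) * (1 + 2 * θ ^ (2 * p) - 4 * θ ^ (2 * p + 1) + θ ^ (4 * p)) +
        (1 / 8) * (1 - θ ^ (2 * p)) ^ 2 -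
        2 * Real.sqrt ((1 / 8) * (1 + 2 * θ ^ (2 * p) - 4 * θ ^ (2 * p + 1) + θ ^ (4 * p)) *
          ((1 / 8) * (1 - θ ^ (2 * p)) ^ 2))) ≤ 1 / (2 * p ^ 2) := by
  obtain ⟨hθ0, hθ1⟩ := hθ
  have hp0 : 0 < p := by linarith
  rw [rpow_add' hθ0 (by positivity), rpow_one, show 4 * p = 2 * p * 2 by ring,
    rpow_mul hθ0 (2 * p), rpow_two]
  set x := θ ^ (2 * p)
  have hx0 : 0 ≤ x := rpow_nonneg hθ0 _
  have hx1 : x < 1 := rpow_lt_one hθ0 hθ1 (by positivity)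
  have hkey : 2 * p * x * (1 - θ) ≤ 1 - x :=
    (mul_rpow_mul_one_sub_le (by linarith) hθ0).trans
      (mul_le_of_le_one_left (by linarith) hθ1.le)
  set p₂ := (1 / 8) * (1 - x) ^ 2
  have hp₂ : 0 < p₂ := by
    have : 0 < 1 - x := by linarith
    positivity
  have hd : 0 ≤ x * (1 - θ) / 2 := by
    have : 0 ≤ 1 - θ := by linarith
    positivity
  have hp₁ : (1 / 8) * (1 + 2 * x - 4 * (x * θ) + x ^ 2) = p₂ + x * (1 - θ) / 2 := by ring
  rw [hp₁, add_sub_two_mul_sqrt_mul (by linarith) hp₂.le]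
  calc 2 * (√(p₂ + x * (1 - θ) / 2) - √p₂) ^ 2
      ≤ 2 * ((x * (1 - θ) / 2) ^ 2 / (4 * p₂)) := by gcongr; exact sq_sqrt_add_sub_sqrt_le hp₂ hd
    _ ≤ 1 / (2 * p ^ 2) := by
      rw [← mul_div_assoc, div_le_div_iff₀ (by positivity) (by positivity)]
      nlinarith [mul_nonneg hp0.le hd]
end

section
/- Let p > 1 be a real number, θ ∈ (0,1), and let X₁,…,X_k be i.i.d. random variables taking values in {−1, 0, 1} with ℙ(X₁ = 1) = (1/8)·(1 + 2θ^{2p} − 4θ^{2p+1} + θ^{4p}) and ℙ(X₁ = −1) = (1/8)·(1 − θ^{2p})². Let Y_k = X₁ + ⋯ + X_k, μ_k = 𝔼[Y_k] and σ_k = √(Var(Y_k)). Then σ_k > 0 and μ_k/σ_k ≥ √k · θ^{2p} · (1 − θ). -/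
/-!
Write `t = θ^{2p}`. A `{-1, 0, 1}`-valued variable has mean `ℙ(X = 1) - ℙ(X = -1)` and second
moment `ℙ(X = 1) + ℙ(X = -1)`, so each `Xᵢ` has mean `m = t(1-θ)/2` and variance
`v = ((1 - tθ)² + 2t²θ(1-θ))/4`, which lies in `(0, 1/4]`. By independence `μ_k = k m` and
`σ_k² = k v`, hence `μ_k / σ_k = √k · m / √v ≥ √k · 2m = √k · t(1-θ)`.
-/

open MeasureTheory ProbabilityTheory

section Ternary

variable {Ω : Type*} {X : Ω → ℝ}

lemma eq_indicator_sub_indicator_of_ternary (hX : ∀ ω, X ω = -1 ∨ X ω = 0 ∨ X ω = 1) :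
    X = {ω | X ω = 1}.indicator 1 - {ω | X ω = -1}.indicator 1 := by
  ext ω
  rcases hX ω with h | h | h <;> norm_num [Set.indicator_apply, h]

lemma sq_eq_indicator_add_indicator_of_ternary (hX : ∀ ω, X ω = -1 ∨ X ω = 0 ∨ X ω = 1) :
    X ^ 2 = {ω | X ω = 1}.indicator 1 + {ω | X ω = -1}.indicator 1 := by
  ext ω
  rcases hX ω with h | h | h <;> norm_num [Set.indicator_apply, h]

variable [MeasurableSpace Ω] {μ : Measure Ω} [IsFiniteMeasure μ] (hmeas : Measurable X)
  (hX : ∀ ω, X ω = -1 ∨ X ω = 0 ∨ X ω = 1)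
include hmeas hX

lemma memLp_of_ternary (q : ENNReal) : MemLp X q μ :=
  MemLp.of_bound hmeas.aestronglyMeasurable 1 <| ae_of_all _ fun ω => by
    rcases hX ω with h | h | h <;> simp [h]

lemma integral_eq_measureReal_sub_of_ternary :
    ∫ ω, X ω ∂μ = μ.real {ω | X ω = 1} - μ.real {ω | X ω = -1} := by
  have h1 : MeasurableSet {ω | X ω = 1} := hmeas (measurableSet_singleton 1)
  have hm1 : MeasurableSet {ω | X ω = -1} := hmeas (measurableSet_singleton (-1))
  rw [← integral_indicator_one h1, ← integral_indicator_one hm1,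
    ← integral_sub ((integrable_const 1).indicator h1) ((integrable_const 1).indicator hm1)]
  exact congrArg (∫ ω, · ω ∂μ) (eq_indicator_sub_indicator_of_ternary hX)

lemma integral_sq_eq_measureReal_add_of_ternary :
    ∫ ω, X ω ^ 2 ∂μ = μ.real {ω | X ω = 1} + μ.real {ω | X ω = -1} := by
  have h1 : MeasurableSet {ω | X ω = 1} := hmeas (measurableSet_singleton 1)
  have hm1 : MeasurableSet {ω | X ω = -1} := hmeas (measurableSet_singleton (-1))
  rw [← integral_indicator_one h1, ← integral_indicator_one hm1,
    ← integral_add ((integrable_const 1).indicator h1) ((integrable_const 1).indicator hm1)]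
  exact congrArg (∫ ω, · ω ∂μ) (sq_eq_indicator_add_indicator_of_ternary hX)

end Ternary

lemma variance_eq_of_ternary {Ω : Type*} [MeasurableSpace Ω] {μ : Measure Ω}
    [IsProbabilityMeasure μ] {X : Ω → ℝ} (hmeas : Measurable X)
    (hX : ∀ ω, X ω = -1 ∨ X ω = 0 ∨ X ω = 1) :
    variance X μ = (μ.real {ω | X ω = 1} + μ.real {ω | X ω = -1}) -
      (μ.real {ω | X ω = 1} - μ.real {ω | X ω = -1}) ^ 2 := by
  rw [variance_eq_sub (memLp_of_ternary hmeas hX 2),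
    ← integral_eq_measureReal_sub_of_ternary hmeas hX,
    ← integral_sq_eq_measureReal_add_of_ternary hmeas hX]
  rfl

section Sum

variable {Ω ι : Type*} [MeasurableSpace Ω] [Fintype ι] {μ : Measure Ω} {X : ι → Ω → ℝ}

lemma integral_fun_sum_of_integral_eq (hX : ∀ i, Integrable (X i) μ) {m : ℝ}
    (hm : ∀ i, ∫ ω, X i ω ∂μ = m) : ∫ ω, ∑ i, X i ω ∂μ = Fintype.card ι * m := by
  simp [integral_finsetSum _ fun i _ => hX i, hm]

lemma variance_fun_sum_of_variance_eq (hX : ∀ i, MemLp (X i) 2 μ) (hindep : iIndepFun X μ)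
    {v : ℝ} (hv : ∀ i, variance (X i) μ = v) :
    variance (fun ω => ∑ i, X i ω) μ = Fintype.card ι * v := by
  have hsum : (fun ω => ∑ i, X i ω) = ∑ i, X i := by ext; simp
  rw [hsum, IndepFun.variance_sum (fun i _ => hX i) fun i _ j _ hij => hindep.indepFun hij]
  simp [hv]

end Sum

lemma sqrt_mul_two_mul_le_mul_div_sqrt_mul {k m v : ℝ} (hk : 0 < k) (hm : 0 ≤ m) (hv : 0 < v)
    (hv4 : v ≤ 1 / 4) : √k * (2 * m) ≤ k * m / √(k * v) := by
  have hsqrt_v : √v ≤ 1 / 2 := (Real.sqrt_le_left (by norm_num)).2 (by linarith)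
  have hsqrt_v0 : 0 < √v := Real.sqrt_pos.2 hv
  have hk_eq : k * m / √(k * v) = √k * (m / √v) := by
    rw [Real.sqrt_mul hk.le]
    field_simp
    rw [Real.sq_sqrt hk.le]
    ring
  rw [hk_eq]
  gcongr
  rw [le_div_iff₀ hsqrt_v0]
  nlinarith

lemma cfn_site_variance_mem_Ioc {t θ : ℝ} (ht0 : 0 < t) (ht1 : t < 1) (hθ0 : 0 < θ)
    (hθ1 : θ < 1) :
    ((1 - t * θ) ^ 2 + 2 * t ^ 2 * θ * (1 - θ)) / 4 ∈ Set.Ioc 0 (1 / 4) := by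
  have htθ : 0 < t * θ := mul_pos ht0 hθ0
  constructor
  · have : 0 < 1 - θ := by linarith
    positivity
  · -- `1 - 4v = tθ(2 - 2t + tθ)`
    nlinarith [mul_pos htθ (by nlinarith : 0 < 2 - 2 * t + t * θ)]

/-- **Lemma 3, part (3), of the paper.** If `X₁, …, X_k` (`k ≥ 1`) are i.i.d. random
variables with values in `{-1, 0, 1}`, where `ℙ(X₁ = 1)` and `ℙ(X₁ = -1)` are the CFN
probabilities of the site-pattern classes `{ααββ, ββαα}` and `{αβαβ, βαβα}`, then the mean
`μ_k` and standard deviation `σ_k` of `Y_k = X₁ + ⋯ + X_k` satisfy `σ_k > 0` and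
`μ_k / σ_k ≥ √k · θ^{2p} (1-θ)`. -/
theorem parsimony_difference_mean_div_sd_lower_bound
    {Ω : Type*} [MeasureSpace Ω] [IsProbabilityMeasure (ℙ : Measure Ω)]
    (p θ : ℝ) (hp : 1 < p) (hθ : θ ∈ Set.Ioo (0 : ℝ) 1)
    (k : ℕ) (hk : 0 < k) (X : Fin k → Ω → ℝ)
    (hmeas : ∀ i, Measurable (X i))
    (hval : ∀ i ω, X i ω = -1 ∨ X i ω = 0 ∨ X i ω = 1)
    (hindep : iIndepFun X ℙ)
    (h1 : ∀ i, (ℙ {ω | X i ω = 1}).toReal =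
      (1 / 8) * (1 + 2 * θ ^ (2 * p) - 4 * θ ^ (2 * p + 1) + θ ^ (4 * p)))
    (hm1 : ∀ i, (ℙ {ω | X i ω = -1}).toReal = (1 / 8) * (1 - θ ^ (2 * p)) ^ 2) :
    0 < Real.sqrt (variance (fun ω => ∑ i : Fin k, X i ω) ℙ) ∧
    (∫ ω, (∑ i : Fin k, X i ω) ∂ℙ) / Real.sqrt (variance (fun ω => ∑ i : Fin k, X i ω) ℙ) ≥
      Real.sqrt k * θ ^ (2 * p) * (1 - θ) := by
  obtain ⟨hθ0, hθ1⟩ := hθ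
  have ht0 : 0 < θ ^ (2 * p) := Real.rpow_pos_of_pos hθ0 _
  have ht1 : θ ^ (2 * p) < 1 := Real.rpow_lt_one hθ0.le hθ1 (by linarith)
  have hpow1 : θ ^ (2 * p + 1) = θ ^ (2 * p) * θ := by rw [Real.rpow_add hθ0, Real.rpow_one]
  have hpow2 : θ ^ (4 * p) = (θ ^ (2 * p)) ^ 2 := by
    rw [show 4 * p = 2 * p + 2 * p by ring, Real.rpow_add hθ0, sq]
  rw [hpow1, hpow2] at h1
  generalize θ ^ (2 * p) = t at *
  have hplus :
      ∀ i, (ℙ : Measure Ω).real {ω | X i ω = 1} = (1 + 2 * t - 4 * t * θ + t ^ 2) / 8 :=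
    fun i => by rw [measureReal_def, h1]; ring
  have hminus : ∀ i, (ℙ : Measure Ω).real {ω | X i ω = -1} = (1 - t) ^ 2 / 8 :=
    fun i => by rw [measureReal_def, hm1]; ring
  have hmean : ∀ i, ∫ ω, X i ω ∂ℙ = t * (1 - θ) / 2 := fun i => by
    rw [integral_eq_measureReal_sub_of_ternary (hmeas i) (hval i), hplus, hminus]; ring
  have hvar : ∀ i, variance (X i) ℙ = ((1 - t * θ) ^ 2 + 2 * t ^ 2 * θ * (1 - θ)) / 4 :=
    fun i => by rw [variance_eq_of_ternary (hmeas i) (hval i), hplus, hminus]; ring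
  obtain ⟨hv0, hv4⟩ := cfn_site_variance_mem_Ioc ht0 ht1 hθ0 hθ1
  have hk0 : (0 : ℝ) < k := Nat.cast_pos.2 hk
  have hmemLp : ∀ i, MemLp (X i) 2 ℙ := fun i => memLp_of_ternary (hmeas i) (hval i) 2
  rw [integral_fun_sum_of_integral_eq (fun i => (hmemLp i).integrable one_le_two) hmean,
    variance_fun_sum_of_variance_eq hmemLp hindep hvar, Fintype.card_fin]
  refine ⟨Real.sqrt_pos.2 (mul_pos hk0 hv0), ?_⟩
  calc √k * t * (1 - θ) = √k * (2 * (t * (1 - θ) / 2)) := by ring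
    _ ≤ _ := sqrt_mul_two_mul_le_mul_div_sqrt_mul hk0 (by nlinarith) hv0 hv4
end

section
/- Let p > 1 be a real number, θ ∈ (0,1), and let k site patterns be drawn i.i.d. from the CFN quartet distribution on {α,β}^4 for topology 12|34 with edge parameter θ^p on each terminal edge and θ on the interior edge. Let Y_k be the number of sampled patterns lying in {ααββ, ββαα} minus the number lying in {αβαβ, βαβα}, and let Ỹ_k be the number of sampled patterns lying in {ααββ, ββαα} minus the number lying in {αββα, βααβ}. Then ℙ(Y_k > 0 and Ỹ_k > 0) ≥ 1 − 2·exp(−k·θ^{4p}·(1−θ)²/8). -/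
open scoped BigOperators

/-- The CFN transition matrix with edge parameter `η`. -/
noncomputable def cfnM (η : ℝ) (a b : Bool) : ℝ :=
  if a = b then (1 + η) / 2 else (1 - η) / 2

/-- The CFN quartet distribution on `{α,β}^4` for the topology `12|34`, with interior edge
parameter `ηint` and common terminal edge parameter `ηterm`. -/
noncomputable def cfnQuartet12_34 (ηint ηterm : ℝ) (s : Fin 4 → Bool) : ℝ :=
  ∑ u : Bool, ∑ v : Bool,
    (1 / 2) * cfnM ηint u v * cfnM ηterm u (s 0) * cfnM ηterm u (s 1) *
      cfnM ηterm v (s 2) * cfnM ηterm v (s 3)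

/-- `+1` if the site pattern lies in the class `{ααββ, ββαα}`, `-1` if it lies in the class
`{αβαβ, βαβα}`, and `0` otherwise. -/
def scoreVs13_24 (s : Fin 4 → Bool) : ℤ :=
  (if s 0 = s 1 ∧ s 2 = s 3 ∧ s 0 ≠ s 2 then 1 else 0) -
    (if s 0 = s 2 ∧ s 1 = s 3 ∧ s 0 ≠ s 1 then 1 else 0)

/-- `+1` if the site pattern lies in the class `{ααββ, ββαα}`, `-1` if it lies in the class
`{αββα, βααβ}`, and `0` otherwise. -/
def scoreVs14_23 (s : Fin 4 → Bool) : ℤ :=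
  (if s 0 = s 1 ∧ s 2 = s 3 ∧ s 0 ≠ s 2 then 1 else 0) -
    (if s 0 = s 3 ∧ s 1 = s 2 ∧ s 0 ≠ s 1 then 1 else 0)

/-!
Under the CFN model the score `scoreVs13_24` of a single site is `+1` with probability
`((1 + t²)² - 4t²θ)/8` and `-1` with probability `(1 - t²)²/8`, where `t = θ^p`, so it is a
`[-1, 1]`-valued variable with mean `t²(1 - θ)/2 > 0`; the same holds for `scoreVs14_23`.
Hoeffding's lemma bounds its moment generating function, the Chernoff bound then gives
`P(Y_k ≤ 0) ≤ exp(-k t⁴(1 - θ)²/8)`, likewise for `Ỹ_k`, and a union bound finishes.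
-/

open Real Finset ProbabilityTheory

theorem Fintype.sum_pi_fin_succ {α M : Type*} [Fintype α] [AddCommMonoid M] {n : ℕ}
    (F : (Fin (n + 1) → α) → M) :
    ∑ s : Fin (n + 1) → α, F s = ∑ a : α, ∑ g : Fin n → α, F (Matrix.vecCons a g) := by
  rw [← (Fin.consEquiv fun _ => α).sum_comp, Fintype.sum_prod_type]
  rfl

theorem sum_mul_exp_le_of_mem_Icc {Ω : Type*} [Fintype Ω] {w X : Ω → ℝ} (hw0 : ∀ s, 0 ≤ w s)
    (hw1 : ∑ s, w s = 1) {a b : ℝ} (hX : ∀ s, X s ∈ Set.Icc a b) (t : ℝ) :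
    ∑ s, w s * exp (t * (X s - ∑ s', w s' * X s')) ≤ exp ((b - a) ^ 2 * t ^ 2 / 8) := by
  let _ : MeasurableSpace Ω := ⊤
  have : MeasurableSingletonClass Ω := ⟨fun _ => trivial⟩
  let P := PMF.ofFintype (fun s => ENNReal.ofReal (w s)) <| by
    rw [← ENNReal.ofReal_sum_of_nonneg fun s _ => hw0 s, hw1, ENNReal.ofReal_one]
  have hP (s : Ω) : (P s).toReal = w s := ENNReal.toReal_ofReal (hw0 s)
  have h := (hasSubgaussianMGF_of_mem_Icc (μ := P.toMeasure) (measurable_from_top.aemeasurable)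
    (MeasureTheory.ae_of_all _ hX)).mgf_le t
  simp only [mgf, PMF.integral_eq_sum, hP, smul_eq_mul] at h
  convert h using 2
  push_cast [coe_nnnorm, Real.norm_eq_abs, div_pow, sq_abs]
  ring

theorem sum_prod_ite_sum_nonpos_le {Ω : Type*} [Fintype Ω] {w : Ω → ℝ} (hw0 : ∀ s, 0 ≤ w s)
    (X : Ω → ℝ) {l : ℝ} (hl : 0 ≤ l) (k : ℕ) :
    ∑ ω : Fin k → Ω, (if ∑ i, X (ω i) ≤ 0 then ∏ i, w (ω i) else 0) ≤
      (∑ s, w s * exp (-l * X s)) ^ k := by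
  rw [Fintype.sum_pow]
  refine sum_le_sum fun ω _ => ?_
  have hW : 0 ≤ ∏ i, w (ω i) := prod_nonneg fun i _ => hw0 (ω i)
  rw [prod_mul_distrib, ← exp_sum, ← mul_sum]
  split_ifs with hX
  · exact le_mul_of_one_le_right hW (one_le_exp (by nlinarith))
  · positivity

theorem sum_prod_ite_sum_nonpos_le_exp {Ω : Type*} [Fintype Ω] {w X : Ω → ℝ}
    (hw0 : ∀ s, 0 ≤ w s) (hw1 : ∑ s, w s = 1) {a b : ℝ} (hX : ∀ s, X s ∈ Set.Icc a b)
    (hm : 0 ≤ ∑ s, w s * X s) (k : ℕ) :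
    ∑ ω : Fin k → Ω, (if ∑ i, X (ω i) ≤ 0 then ∏ i, w (ω i) else 0) ≤
      exp (-2 * k * (∑ s, w s * X s) ^ 2 / (b - a) ^ 2) := by
  set m := ∑ s, w s * X s
  -- the minimiser of the Chernoff exponent `k (-l m + (b - a)² l² / 8)`
  set l := 4 * m / (b - a) ^ 2
  have hmgf : ∑ s, w s * exp (-l * X s) ≤ exp (-l * m + (b - a) ^ 2 * l ^ 2 / 8) := by
    calc ∑ s, w s * exp (-l * X s) = exp (-l * m) * ∑ s, w s * exp (-l * (X s - m)) := by
          rw [mul_sum]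
          refine sum_congr rfl fun s _ => ?_
          rw [mul_left_comm, ← exp_add]
          ring_nf
      _ ≤ exp (-l * m) * exp ((b - a) ^ 2 * (-l) ^ 2 / 8) := by
          gcongr
          exact sum_mul_exp_le_of_mem_Icc hw0 hw1 hX (-l)
      _ = exp (-l * m + (b - a) ^ 2 * l ^ 2 / 8) := by rw [← exp_add, neg_sq]
  have hexponent : k * (-l * m + (b - a) ^ 2 * l ^ 2 / 8) = -2 * k * m ^ 2 / (b - a) ^ 2 := by
    rcases eq_or_ne ((b - a) ^ 2) 0 with h | h
    · simp [l, h]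
    · simp only [l]
      field_simp
      ring
  calc _ ≤ (∑ s, w s * exp (-l * X s)) ^ k :=
        sum_prod_ite_sum_nonpos_le hw0 X (by positivity) k
    _ ≤ exp (-l * m + (b - a) ^ 2 * l ^ 2 / 8) ^ k := by
        gcongr
        exact sum_nonneg fun s _ => mul_nonneg (hw0 s) (exp_pos _).le
    _ = exp (-2 * k * m ^ 2 / (b - a) ^ 2) := by rw [← exp_nat_mul, hexponent]

theorem sum_prod_ite_not_sum_pos_le_exp {Ω : Type*} [Fintype Ω] {w : Ω → ℝ}
    (hw0 : ∀ s, 0 ≤ w s) (hw1 : ∑ s, w s = 1) {f : Ω → ℤ} (hf : ∀ s, f s ∈ Set.Icc (-1) 1)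
    (hm : 0 ≤ ∑ s, w s * f s) (k : ℕ) :
    ∑ ω : Fin k → Ω, (if ¬ 0 < ∑ i, f (ω i) then ∏ i, w (ω i) else 0) ≤
      exp (-k * (∑ s, w s * f s) ^ 2 / 2) := by
  have hX (s : Ω) : (f s : ℝ) ∈ Set.Icc (-1) 1 := by
    obtain ⟨h₁, h₂⟩ := hf s
    exact ⟨by exact_mod_cast h₁, by exact_mod_cast h₂⟩
  convert sum_prod_ite_sum_nonpos_le_exp hw0 hw1 hX hm k using 2
  · simp only [not_lt]
    norm_cast
  · ring

theorem sum_sub_sum_ite_not_sub_sum_ite_not_le {ι : Type*} [Fintype ι] {W : ι → ℝ}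
    (hW : ∀ i, 0 ≤ W i) (P Q : ι → Prop) [DecidablePred P] [DecidablePred Q] :
    ∑ i, W i - ∑ i, (if ¬ P i then W i else 0) - ∑ i, (if ¬ Q i then W i else 0) ≤
      ∑ i, if P i ∧ Q i then W i else 0 := by
  rw [← sum_sub_distrib, ← sum_sub_distrib]
  refine sum_le_sum fun i _ => ?_
  have := hW i
  split_ifs <;> simp_all

theorem cfnM_nonneg {η : ℝ} (h : η ∈ Set.Icc (-1) 1) (a b : Bool) : 0 ≤ cfnM η a b := by
  obtain ⟨h0, h1⟩ := h
  unfold cfnM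
  split_ifs <;> linarith

theorem cfnQuartet12_34_nonneg {ηint ηterm : ℝ} (hint : ηint ∈ Set.Icc (-1) 1)
    (hterm : ηterm ∈ Set.Icc (-1) 1) (s : Fin 4 → Bool) : 0 ≤ cfnQuartet12_34 ηint ηterm s := by
  have hM := cfnM_nonneg hint
  have hM' := cfnM_nonneg hterm
  exact sum_nonneg fun u _ => sum_nonneg fun v _ => by apply_rules [mul_nonneg] <;> norm_num

theorem sum_cfnQuartet12_34 (ηint ηterm : ℝ) : ∑ s, cfnQuartet12_34 ηint ηterm s = 1 := by
  simp only [Fintype.sum_pi_fin_succ, Fintype.sum_unique, cfnQuartet12_34, cfnM,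
    Fintype.sum_bool, Matrix.cons_val]
  norm_num
  ring

theorem sum_cfnQuartet12_34_mul_scoreVs13_24 (ηint ηterm : ℝ) :
    ∑ s, cfnQuartet12_34 ηint ηterm s * scoreVs13_24 s = ηterm ^ 2 * (1 - ηint) / 2 := by
  simp only [Fintype.sum_pi_fin_succ, Fintype.sum_unique, cfnQuartet12_34, cfnM,
    Fintype.sum_bool, scoreVs13_24, Matrix.cons_val]
  norm_num
  ring

theorem sum_cfnQuartet12_34_mul_scoreVs14_23 (ηint ηterm : ℝ) :
    ∑ s, cfnQuartet12_34 ηint ηterm s * scoreVs14_23 s = ηterm ^ 2 * (1 - ηint) / 2 := by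
  simp only [Fintype.sum_pi_fin_succ, Fintype.sum_unique, cfnQuartet12_34, cfnM,
    Fintype.sum_bool, scoreVs14_23, Matrix.cons_val]
  norm_num
  ring

theorem scoreVs13_24_mem_Icc (s : Fin 4 → Bool) : scoreVs13_24 s ∈ Set.Icc (-1) 1 := by
  revert s; decide

theorem scoreVs14_23_mem_Icc (s : Fin 4 → Bool) : scoreVs14_23 s ∈ Set.Icc (-1) 1 := by
  revert s; decide

/-- Non-asymptotic (Hoeffding/Azuma) form of **Theorem 2 of the paper**: for `k` sites
drawn i.i.d. from the CFN quartet distribution on the tree `12|34` with terminal edge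
parameters `θ^p` and interior edge parameter `θ`, maximum parsimony strictly prefers the
true topology over both alternatives (i.e. `Y_k > 0` and `Ỹ_k > 0`) with probability at
least `1 - 2·exp(-k·θ^{4p}(1-θ)²/8)`. -/
theorem mp_reconstruction_hoeffding_bound (p θ : ℝ) (hp : 1 < p)
    (hθ : θ ∈ Set.Ioo (0 : ℝ) 1) (k : ℕ) :
    1 - 2 * Real.exp (-(k : ℝ) * θ ^ (4 * p) * (1 - θ) ^ 2 / 8) ≤
      ∑ ω : Fin k → Fin 4 → Bool,
        (if 0 < ∑ i : Fin k, scoreVs13_24 (ω i) ∧ 0 < ∑ i : Fin k, scoreVs14_23 (ω i) then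
          ∏ i : Fin k, cfnQuartet12_34 θ (θ ^ p) (ω i) else 0) := by
  obtain ⟨hθ0, hθ1⟩ := hθ
  set t := θ ^ p
  have ht : t ∈ Set.Icc (-1) 1 :=
    ⟨by linarith [rpow_pos_of_pos hθ0 p], rpow_le_one hθ0.le hθ1.le (by linarith)⟩
  have hw0 := cfnQuartet12_34_nonneg ⟨by linarith, hθ1.le⟩ ht
  have hmean : 0 ≤ t ^ 2 * (1 - θ) / 2 :=
    div_nonneg (mul_nonneg (sq_nonneg t) (by linarith)) zero_le_two
  have h13 := sum_prod_ite_not_sum_pos_le_exp hw0 (sum_cfnQuartet12_34 θ t)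
    scoreVs13_24_mem_Icc (by rwa [sum_cfnQuartet12_34_mul_scoreVs13_24]) k
  have h14 := sum_prod_ite_not_sum_pos_le_exp hw0 (sum_cfnQuartet12_34 θ t)
    scoreVs14_23_mem_Icc (by rwa [sum_cfnQuartet12_34_mul_scoreVs14_23]) k
  rw [sum_cfnQuartet12_34_mul_scoreVs13_24] at h13
  rw [sum_cfnQuartet12_34_mul_scoreVs14_23] at h14
  have htotal : ∑ ω : Fin k → Fin 4 → Bool, ∏ i, cfnQuartet12_34 θ t (ω i) = 1 := by
    rw [← Fintype.sum_pow, sum_cfnQuartet12_34, one_pow]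
  have hexponent :
      -(k : ℝ) * θ ^ (4 * p) * (1 - θ) ^ 2 / 8 = -k * (t ^ 2 * (1 - θ) / 2) ^ 2 / 2 := by
    rw [mul_comm 4 p, rpow_mul hθ0.le, show (4 : ℝ) = (4 : ℕ) by norm_num, rpow_natCast]
    ring
  have hunion := sum_sub_sum_ite_not_sub_sum_ite_not_le
    (W := fun ω : Fin k → Fin 4 → Bool => ∏ i, cfnQuartet12_34 θ t (ω i))
    (fun ω => prod_nonneg fun i _ => hw0 (ω i)) (fun ω => 0 < ∑ i, scoreVs13_24 (ω i))
    (fun ω => 0 < ∑ i, scoreVs14_23 (ω i))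
  rw [hexponent]
  linarith
end

section
/- Let p ≥ 1 be a real number, ε ∈ (0,1), and set x = 1/(4p) and Q = (1 − e^{−x})·(1 − e^{−px})⁴ = (1 − e^{−1/(4p)})·(1 − e^{−1/4})⁴. If k is a real number (in particular, a positive integer) with k ≥ 5·(1 − e^{−1/4})^{−4}·log(1/ε)·p, then (1 − Q)^k ≤ ε. In particular, a constant c'_ε depending only on ε exists (namely c'_ε = 5(1 − e^{−1/4})^{−4} log(1/ε)) such that whenever k ≥ c'_ε·p, there is an interior branch length x for which the probability that at least one of k i.i.d. random-cluster characters resolves the tree is at least 1 − ε. -/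
/-!
Since `1 - Q ≤ e^{-Q}`, we have `(1 - Q)^k ≤ e^{-Qk}`, so it suffices that `Qk ≥ log (1/ε)`.
From `1 + x ≤ eˣ` one gets `1 - e^{-x} ≥ x / (1 + x)`, which for `x = 1/(4p)` and `p ≥ 1` gives
`1 - e^{-1/(4p)} ≥ 1/(4p + 1) ≥ 1/(5p)`; hence `Q ≥ (1 - e^{-1/4})⁴ / (5p)`, and the hypothesis
on `k` is exactly what makes this lower bound times `k` reach `log (1/ε)`.
-/

open Real

lemma div_one_add_le_one_sub_exp_neg {x : ℝ} (hx : -1 < x) : x / (1 + x) ≤ 1 - exp (-x) := by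
  have hpos : 0 < 1 + x := by linarith
  have hexp : exp (-x) ≤ (1 + x)⁻¹ := by
    rw [exp_neg]
    exact inv_anti₀ hpos (by linarith [add_one_le_exp x])
  have hsplit : x / (1 + x) = 1 - (1 + x)⁻¹ := by field_simp; ring
  linarith

lemma one_sub_rpow_le_exp_neg_mul {q k : ℝ} (hq : q ≤ 1) (hk : 0 ≤ k) :
    (1 - q) ^ k ≤ exp (-(q * k)) :=
  calc (1 - q) ^ k ≤ exp (-q) ^ k := rpow_le_rpow (by linarith) (one_sub_le_exp_neg q) hk
    _ = exp (-(q * k)) := by rw [← exp_mul, neg_mul]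

lemma one_sub_rpow_le_of_log_one_div_le {q k ε : ℝ} (hq : q ≤ 1) (hk : 0 ≤ k) (hε : 0 < ε)
    (h : log (1 / ε) ≤ q * k) : (1 - q) ^ k ≤ ε :=
  calc (1 - q) ^ k ≤ exp (-(q * k)) := one_sub_rpow_le_exp_neg_mul hq hk
    _ ≤ exp (log ε) := by
      rw [one_div, log_inv] at h
      rw [exp_le_exp]
      linarith
    _ = ε := exp_log hε

lemma div_five_mul_le_one_sub_exp_neg {p : ℝ} (hp : 1 ≤ p) :
    1 / (5 * p) ≤ 1 - exp (-(1 / (4 * p))) := by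
  have hp0 : 0 < p := by linarith
  have hx : -1 < 1 / (4 * p) := by linarith [show 0 < 1 / (4 * p) by positivity]
  calc 1 / (5 * p) ≤ 1 / (4 * p + 1) := one_div_le_one_div_of_le (by positivity) (by linarith)
    _ = 1 / (4 * p) / (1 + 1 / (4 * p)) := by field_simp
    _ ≤ 1 - exp (-(1 / (4 * p))) := div_one_add_le_one_sub_exp_neg hx

/-- **Proposition (random cluster model).**  Taking interior branch length `x = 1/(4p)`
(so terminal branch lengths are `p·x = 1/4`), a single random-cluster character resolves
the four-taxon tree with probability `Q = (1 - e^{-1/(4p)})(1 - e^{-1/4})⁴`.  Whenever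
`k ≥ c'_ε · p` with `c'_ε = 5·(1 - e^{-1/4})⁻⁴·log(1/ε)` (a constant depending only on
`ε`), the probability `(1-Q)^k` that none of `k` i.i.d. characters resolves the tree is at
most `ε`; that is, maximum parsimony reconstructs the tree with probability at least
`1 - ε` from `k` characters of sequence length growing only linearly in `p`. -/
theorem random_cluster_linear_sequence_length (p ε : ℝ) (hp : 1 ≤ p)
    (hε : ε ∈ Set.Ioo (0 : ℝ) 1) (k : ℝ)
    (hk : k ≥ 5 * ((1 - Real.exp (-(1 / 4 : ℝ))) ^ 4)⁻¹ * Real.log (1 / ε) * p) :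
    (1 - (1 - Real.exp (-(1 / (4 * p)))) * (1 - Real.exp (-(1 / 4 : ℝ))) ^ 4) ^ k ≤ ε := by
  obtain ⟨hε0, hε1⟩ := hε
  have hp0 : 0 < p := by linarith
  set a := 1 - exp (-(1 / 4 : ℝ))
  set b := 1 - exp (-(1 / (4 * p)))
  have ha0 : 0 < a := by linarith [exp_lt_one_iff.mpr (show -(1 / 4 : ℝ) < 0 by norm_num)]
  have ha1 : a ≤ 1 := by linarith [exp_pos (-(1 / 4 : ℝ))]
  have hb : 1 / (5 * p) ≤ b := div_five_mul_le_one_sub_exp_neg hp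
  have hb0 : 0 ≤ b := le_trans (by positivity) hb
  have hb_le : b ≤ 1 := by linarith [exp_pos (-(1 / (4 * p)))]
  have hlog : 0 < log (1 / ε) := log_pos (by rw [one_div]; exact one_lt_inv₀ hε0 |>.mpr hε1)
  have hk0 : 0 ≤ k := le_trans (by positivity) hk
  refine one_sub_rpow_le_of_log_one_div_le
    (mul_le_one₀ hb_le (by positivity) (pow_le_one₀ ha0.le ha1)) hk0 hε0 ?_
  calc log (1 / ε) = 1 / (5 * p) * a ^ 4 * (5 * (a ^ 4)⁻¹ * log (1 / ε) * p) := by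
        field_simp
    _ ≤ b * a ^ 4 * k := by gcongr
end

section
/- Let S be a finite set, let τ ∈ [0,1] and l ≥ τ be real numbers, and let r, p', q' be probability distributions on S. Define probability distributions p and q on S by p_s = (1−τ)·r_s + τ·p'_s and q_s = (1−τ)·r_s + τ·q'_s, and suppose p_s > 0 for every s ∈ S. Then 2·(1 − Σ_{s∈S} √(p_s·q_s)) ≤ l² · Σ_{s∈S} (q'_s − p'_s)²/p_s. -/
open Finset

/-- For `b ≥ 0` this is `(√a - √b)² ≤ (√a - √b)² (√a + √b)² / a`; for `b < 0` the square root
vanishes and the bound is `3ab ≤ b²`. -/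
lemma add_sub_two_mul_sqrt_mul_le_sq_div {a : ℝ} (b : ℝ) (ha : 0 < a) :
    a + b - 2 * √(a * b) ≤ (b - a) ^ 2 / a := by
  rw [le_div_iff₀ ha]
  rcases lt_or_ge b 0 with hb | hb
  · rw [Real.sqrt_eq_zero'.2 (mul_nonpos_of_nonneg_of_nonpos ha.le hb.le)]
    nlinarith [mul_neg_of_pos_of_neg ha hb]
  · obtain ⟨x, hx, rfl⟩ : ∃ x, 0 ≤ x ∧ x ^ 2 = a := ⟨√a, Real.sqrt_nonneg a, Real.sq_sqrt ha.le⟩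
    obtain ⟨y, hy, rfl⟩ : ∃ y, 0 ≤ y ∧ y ^ 2 = b := ⟨√b, Real.sqrt_nonneg b, Real.sq_sqrt hb⟩
    rw [← mul_pow, Real.sqrt_sq (mul_nonneg hx hy)]
    nlinarith [mul_nonneg (sq_nonneg (x - y)) (mul_nonneg hy (add_nonneg (add_nonneg hx hx) hy))]

/-- Squared Hellinger distance is bounded by the χ²-divergence. -/
lemma two_mul_one_sub_sum_sqrt_mul_le_sum_sq_div {ι : Type*} (s : Finset ι) (p q : ι → ℝ)
    (hp : ∀ i ∈ s, 0 < p i) (hp1 : ∑ i ∈ s, p i = 1) (hq1 : ∑ i ∈ s, q i = 1) :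
    2 * (1 - ∑ i ∈ s, √(p i * q i)) ≤ ∑ i ∈ s, (q i - p i) ^ 2 / p i := by
  calc 2 * (1 - ∑ i ∈ s, √(p i * q i))
      = ∑ i ∈ s, (p i + q i - 2 * √(p i * q i)) := by
        rw [sum_sub_distrib, sum_add_distrib, hp1, hq1, ← mul_sum]; ring
    _ ≤ ∑ i ∈ s, (q i - p i) ^ 2 / p i :=
        sum_le_sum fun i hi => add_sub_two_mul_sqrt_mul_le_sq_div (q i) (hp i hi)

lemma sum_convex_combination_eq_one {ι : Type*} (s : Finset ι) (t : ℝ) (f g : ι → ℝ)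
    (hf : ∑ i ∈ s, f i = 1) (hg : ∑ i ∈ s, g i = 1) :
    ∑ i ∈ s, ((1 - t) * f i + t * g i) = 1 := by
  rw [sum_add_distrib, ← mul_sum, ← mul_sum, hf, hg]; ring

theorem hellinger_sq_mixture_bound_general {S : Type*} [Fintype S]
    (τ l : ℝ) (hτ : τ ∈ Set.Icc (0 : ℝ) 1) (hτl : τ ≤ l)
    (r p' q' : S → ℝ)
    (hr1 : ∑ s : S, r s = 1)
    (hp'1 : ∑ s : S, p' s = 1)
    (hq'1 : ∑ s : S, q' s = 1)
    (hpos : ∀ s, 0 < (1 - τ) * r s + τ * p' s) :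
    2 * (1 - ∑ s : S, Real.sqrt (((1 - τ) * r s + τ * p' s) * ((1 - τ) * r s + τ * q' s)))
      ≤ l ^ 2 * ∑ s : S, (q' s - p' s) ^ 2 / ((1 - τ) * r s + τ * p' s) := by
  have hτ_sq : τ ^ 2 ≤ l ^ 2 := pow_le_pow_left₀ hτ.1 hτl 2
  refine (two_mul_one_sub_sum_sqrt_mul_le_sum_sq_div _ _ _ (fun s _ => hpos s)
    (sum_convex_combination_eq_one _ _ _ _ hr1 hp'1)
    (sum_convex_combination_eq_one _ _ _ _ hr1 hq'1)).trans ?_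
  rw [mul_sum]
  refine sum_le_sum fun s _ => ?_
  calc ((1 - τ) * r s + τ * q' s - ((1 - τ) * r s + τ * p' s)) ^ 2 / ((1 - τ) * r s + τ * p' s)
      = τ ^ 2 * ((q' s - p' s) ^ 2 / ((1 - τ) * r s + τ * p' s)) := by ring
    _ ≤ l ^ 2 * ((q' s - p' s) ^ 2 / ((1 - τ) * r s + τ * p' s)) :=
        mul_le_mul_of_nonneg_right hτ_sq (div_nonneg (sq_nonneg _) (hpos s).le)

/-- **Lemma 4 of the paper** (abstract form).  Let `p = (1-τ)·r + τ·p'` and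
`q = (1-τ)·r + τ·q'` be mixtures of probability distributions on a finite set `S`, with
`τ ∈ [0,1]`, `τ ≤ l`, and `p` everywhere positive.  Then the squared Hellinger distance
between `p` and `q` satisfies `d_H²(p,q) ≤ l² · Σ_s (q'_s - p'_s)²/p_s`. -/
theorem hellinger_sq_mixture_bound {S : Type*} [Fintype S]
    (τ l : ℝ) (hτ : τ ∈ Set.Icc (0 : ℝ) 1) (hτl : τ ≤ l)
    (r p' q' : S → ℝ)
    (hr0 : ∀ s, 0 ≤ r s) (hr1 : ∑ s : S, r s = 1)
    (hp'0 : ∀ s, 0 ≤ p' s) (hp'1 : ∑ s : S, p' s = 1)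
    (hq'0 : ∀ s, 0 ≤ q' s) (hq'1 : ∑ s : S, q' s = 1)
    (hpos : ∀ s, 0 < (1 - τ) * r s + τ * p' s) :
    2 * (1 - ∑ s : S, Real.sqrt (((1 - τ) * r s + τ * p' s) * ((1 - τ) * r s + τ * q' s)))
      ≤ l ^ 2 * ∑ s : S, (q' s - p' s) ^ 2 / ((1 - τ) * r s + τ * p' s) :=
  hellinger_sq_mixture_bound_general τ l hτ hτl r p' q' hr1 hp'1 hq'1 hpos
end
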